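/- arXiv:q-alg/9702011 — 3 statements merged into one kernel-verified Lean document; each statement's English description precedes it below -/
import Mathlib

section
/- Let q, k be real with 0 < q < 1 and 0 < k < 1. For n ∈ ℕ define the polynomial P_n(z_1, z_2) := Σ_{m=0}^n [∏_{l=0}^{m−1} (1−q^{k+l})(1−q^{−n+l}) / ((1−q^{1+l})(1−q^{1−n−k+l}))] · q^{(1−k)m} · z_1^m z_2^{n−m} (the terminating series z_2^n F_q(k, −n, −n−k+1, q^{1−k} z_1/z_2)). Then P_n is symmetric: P_n(z_1, z_2) = P_n(z_2, z_1) for all z_1, z_2 ∈ ℂ. -/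
/-- `q^x := exp(x·log q)` for real `q > 0` and complex `x`. -/
noncomputable def qpow (q : ℝ) (x : ℂ) : ℂ := Complex.exp (x * Real.log q)

/-- The terminating q-hypergeometric (Macdonald) polynomial of degree `n` in two
variables: `P_n(z₁,z₂) = z₂^n F_q(k, -n, -n-k+1, q^{1-k} z₁/z₂)` written out. -/
noncomputable def macP (q k : ℝ) (n : ℕ) (z1 z2 : ℂ) : ℂ :=
  ∑ m ∈ Finset.range (n + 1),
    (∏ l ∈ Finset.range m,
      ((1 - qpow q ((k : ℂ) + l)) * (1 - qpow q ((l : ℂ) - n)) /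
        ((1 - qpow q (1 + l)) * (1 - qpow q (1 - (n : ℂ) - k + l))))) *
      qpow q ((1 - (k : ℂ)) * m) * z1 ^ m * z2 ^ (n - m)

/-! The coefficient of `z₁^m z₂^(n-m)` equals `∏_{l<m} A l / A (n-1-l)` with
`A j = (1 - q^(k+j)) / (1 - q^(1+j))`: the extra factor `q^(1-k)` per step turns
`(1 - q^(l-n)) / (1 - q^(1-n-k+l))` into `(1 - q^(n-l)) / (1 - q^(k+n-1-l))`. In q-Pochhammer
terms the coefficient is `(q^k;q)_m (q^k;q)_(n-m) (q;q)_n / ((q;q)_m (q;q)_(n-m) (q^k;q)_n)`,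
visibly invariant under `m ↦ n - m`. -/

open Finset

section ReflectedProducts

variable {n : ℕ}

theorem Finset.prod_range_mul_prod_range_sub_reflect {M : Type*} [CommMonoid M] (A : ℕ → M)
    {m : ℕ} (hm : m ≤ n) :
    (∏ l ∈ range m, A l) * ∏ l ∈ range (n - m), A (n - 1 - l) = ∏ l ∈ range n, A l := by
  induction m with
  | zero => simpa using prod_range_reflect A n
  | succ m ih =>
    obtain ⟨j, hj⟩ : ∃ j, n - m = j + 1 := ⟨n - m - 1, by omega⟩
    have hA : A (n - 1 - j) = A m := congrArg A (by omega)
    rw [← ih (by omega), hj, prod_range_succ, prod_range_succ, hA,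
      show n - (m + 1) = j by omega]
    ac_rfl

theorem Finset.prod_range_div_reflect_eq {K : Type*} [Field K] (A : ℕ → K)
    (hA : ∀ l < n, A l ≠ 0) {m : ℕ} (hm : m ≤ n) :
    ∏ l ∈ range m, A l / A (n - 1 - l) = ∏ l ∈ range (n - m), A l / A (n - 1 - l) := by
  have hden : ∀ p ≤ n, ∏ l ∈ range p, A (n - 1 - l) ≠ 0 := fun p hp =>
    prod_ne_zero_iff.mpr fun l hl => hA _ (by simp at hl; omega)
  rw [prod_div_distrib, prod_div_distrib, div_eq_div_iff (hden m hm) (hden _ (Nat.sub_le n m)),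
    prod_range_mul_prod_range_sub_reflect A hm]
  have := prod_range_mul_prod_range_sub_reflect A (Nat.sub_le n m)
  rwa [Nat.sub_sub_self hm, eq_comm] at this

end ReflectedProducts

section QPow

variable {q : ℝ}

theorem qpow_neg (q : ℝ) (a : ℂ) : qpow q (-a) = (qpow q a)⁻¹ := by
  simp only [qpow, neg_mul, Complex.exp_neg]

theorem qpow_sub (q : ℝ) (a b : ℂ) : qpow q (a - b) = qpow q a / qpow q b := by
  simp only [qpow, sub_mul, Complex.exp_sub]

theorem qpow_mul_natCast (q : ℝ) (a : ℂ) (m : ℕ) : qpow q (a * m) = qpow q a ^ m := by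
  rw [qpow, mul_comm a, mul_assoc, Complex.exp_nat_mul, qpow]

theorem qpow_ne_zero (q : ℝ) (a : ℂ) : qpow q a ≠ 0 := Complex.exp_ne_zero _

theorem one_sub_qpow_ofReal_ne_zero (hq0 : 0 < q) (hq1 : q < 1) {r : ℝ} (hr : r ≠ 0) :
    1 - qpow q r ≠ 0 := by
  have hlog : Real.log q ≠ 0 := (Real.log_neg hq0 hq1).ne
  rw [sub_ne_zero, ne_comm, qpow, ← Complex.ofReal_mul, ← Complex.ofReal_exp,
    Ne, Complex.ofReal_eq_one, Real.exp_eq_one_iff]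
  exact mul_ne_zero hr hlog

/-- With `x = q^a`, `y = q^b` this is `x (1 - y⁻¹) (1 - y/x) = (1 - y) (1 - x/y)`. -/
theorem qpow_mul_one_sub_qpow_neg_mul (q : ℝ) (a b : ℂ) :
    qpow q a * (1 - qpow q (-b)) * (1 - qpow q (b - a)) =
      (1 - qpow q b) * (1 - qpow q (a - b)) := by
  have hx := qpow_ne_zero q a
  have hy := qpow_ne_zero q b
  rw [qpow_neg, qpow_sub, qpow_sub]
  field_simp
  ring

end QPow

-- its partial products are `(q^k; q)_m / (q; q)_m`
noncomputable def qPochRatio (q k : ℝ) (j : ℕ) : ℂ :=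
  (1 - qpow q (k + j)) / (1 - qpow q (1 + j))

section Coefficients

variable {q k : ℝ}

theorem qPochRatio_ne_zero (hq0 : 0 < q) (hq1 : q < 1) (hk0 : 0 < k) (j : ℕ) :
    qPochRatio q k j ≠ 0 := by
  refine div_ne_zero ?_ ?_
  · simpa using one_sub_qpow_ofReal_ne_zero hq0 hq1 (r := k + j) (by positivity)
  · simpa using one_sub_qpow_ofReal_ne_zero hq0 hq1 (r := 1 + j) (by positivity)

theorem macP_factor_mul_qpow_eq (hq0 : 0 < q) (hq1 : q < 1) (hk0 : 0 < k)
    {n l : ℕ} (hl : l < n) :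
    (1 - qpow q ((k : ℂ) + l)) * (1 - qpow q ((l : ℂ) - n)) /
        ((1 - qpow q (1 + l)) * (1 - qpow q (1 - (n : ℂ) - k + l))) * qpow q (1 - k) =
      qPochRatio q k l / qPochRatio q k (n - 1 - l) := by
  have hcast : ((n - 1 - l : ℕ) : ℂ) = n - 1 - l := by
    rw [show n - 1 - l = n - (l + 1) by omega, Nat.cast_sub hl]; push_cast; ring
  have hln : (l : ℝ) + 1 ≤ n := by exact_mod_cast hl
  have d1 : 1 - qpow q (1 + l) ≠ 0 := by
    simpa using one_sub_qpow_ofReal_ne_zero hq0 hq1 (r := 1 + l) (by positivity)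
  have d2 : 1 - qpow q (1 - (n : ℂ) - k + l) ≠ 0 := by
    simpa using one_sub_qpow_ofReal_ne_zero hq0 hq1 (r := 1 - n - k + l) (by linarith)
  have d3 : 1 - qpow q (k + ((n : ℂ) - 1 - l)) ≠ 0 := by
    simpa using one_sub_qpow_ofReal_ne_zero hq0 hq1 (r := k + (n - 1 - l)) (by linarith)
  have d4 : 1 - qpow q (1 + ((n : ℂ) - 1 - l)) ≠ 0 := by
    simpa using one_sub_qpow_ofReal_ne_zero hq0 hq1 (r := 1 + (n - 1 - l)) (by linarith)
  have key := qpow_mul_one_sub_qpow_neg_mul q (1 - k) (n - l)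
  rw [show -((n : ℂ) - l) = l - n by ring, show (n : ℂ) - l - (1 - k) = k + (n - 1 - l) by ring,
    show (n : ℂ) - l = 1 + (n - 1 - l) by ring,
    show 1 - (k : ℂ) - (1 + (n - 1 - l)) = 1 - n - k + l by ring] at key
  unfold qPochRatio
  rw [hcast]
  field_simp
  linear_combination (1 - qpow q (k + l)) * key

theorem macP_coeff_eq_prod_qPochRatio (hq0 : 0 < q) (hq1 : q < 1) (hk0 : 0 < k)
    {n m : ℕ} (hm : m ≤ n) :
    (∏ l ∈ range m, (1 - qpow q ((k : ℂ) + l)) * (1 - qpow q ((l : ℂ) - n)) /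
        ((1 - qpow q (1 + l)) * (1 - qpow q (1 - (n : ℂ) - k + l)))) *
        qpow q ((1 - (k : ℂ)) * m) =
      ∏ l ∈ range m, qPochRatio q k l / qPochRatio q k (n - 1 - l) := by
  rw [qpow_mul_natCast, pow_eq_prod_const, ← prod_mul_distrib]
  exact prod_congr rfl fun l hl => macP_factor_mul_qpow_eq hq0 hq1 hk0 (by simp at hl; omega)

end Coefficients

theorem stmt4_general (q k : ℝ) (hq0 : 0 < q) (hq1 : q < 1) (hk0 : 0 < k)
    (n : ℕ) (z1 z2 : ℂ) :
    macP q k n z1 z2 = macP q k n z2 z1 := by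
  unfold macP
  rw [← sum_range_reflect]
  refine sum_congr rfl fun m hm => ?_
  have hmn : m ≤ n := Nat.lt_succ_iff.mp (mem_range.mp hm)
  rw [Nat.add_sub_cancel, Nat.sub_sub_self hmn,
    macP_coeff_eq_prod_qPochRatio hq0 hq1 hk0 hmn,
    macP_coeff_eq_prod_qPochRatio hq0 hq1 hk0 (Nat.sub_le n m),
    prod_range_div_reflect_eq _ (fun l _ => qPochRatio_ne_zero hq0 hq1 hk0 l) hmn]
  ring

/-- The Macdonald polynomial `P_n` is symmetric. -/
theorem stmt4 (q k : ℝ) (hq0 : 0 < q) (hq1 : q < 1) (hk0 : 0 < k) (hk1 : k < 1)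
    (n : ℕ) (z1 z2 : ℂ) :
    macP q k n z1 z2 = macP q k n z2 z1 :=
  stmt4_general q k hq0 hq1 hk0 n z1 z2
end

section
/- Let q, k be real with 0 < q < 1 and 0 < k < 1, set t := q^k, and for n ∈ ℕ let P_n(z_1, z_2) := Σ_{m=0}^n [∏_{l=0}^{m−1} (1−q^{k+l})(1−q^{−n+l}) / ((1−q^{1+l})(1−q^{1−n−k+l}))] · q^{(1−k)m} · z_1^m z_2^{n−m}. Then P_n is an eigenfunction of the rank-one Macdonald operator: for all z_1, z_2 ∈ ℂ with z_1 ≠ z_2, t·[ ((t z_1 − z_2)/(z_1 − z_2))·P_n(q z_1, z_2) + ((t z_2 − z_1)/(z_2 − z_1))·P_n(z_1, q z_2) ] = t·(1 + t q^n)·P_n(z_1, z_2). -/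
/-!
Write `P_n = ∑ c_m z₁^m z₂^(n-m)` and `T = q^k`. Multiplied by `z₁ - z₂`, the eigenvalue equation
becomes `∑ c_m (a_m z₁^(m+1) z₂^(n-m) - b_m z₁^m z₂^(n-m+1)) = 0` with
`a_m = T q^m + q^(n-m) - (1 + T qⁿ)` and `b_m = q^m + T q^(n-m) - (1 + T qⁿ)`.
As `a_n = b_0 = 0`, the sum telescopes as soon as `c_m a_m = c_{m+1} b_{m+1}`. Since
`a_m = -(1 - T q^m)(1 - q^(n-m))` and `b_{m+1} = -(1 - q^(m+1))(1 - T q^(n-m-1))`, this is exactly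
the ratio `c_{m+1} / c_m` of the q-hypergeometric coefficients.
-/

open Finset

lemma qpow_eq_cpow {q : ℝ} (hq : 0 < q) (x : ℂ) : qpow q x = (q : ℂ) ^ x := by
  rw [qpow, Complex.cpow_def_of_ne_zero (Complex.ofReal_ne_zero.mpr hq.ne'),
    ← Complex.ofReal_log hq.le, mul_comm]

lemma qpow_add (q : ℝ) (x y : ℂ) : qpow q (x + y) = qpow q x * qpow q y := by
  rw [qpow, qpow, qpow, add_mul, Complex.exp_add]

lemma sum_range_telescope_of_shift {R : Type*} [CommRing R] {n : ℕ} {f g : ℕ → R} (x y : R)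
    (hf : f n = 0) (hg : g 0 = 0) (hfg : ∀ m < n, f m = g (m + 1)) :
    ∑ m ∈ range (n + 1), (f m * x ^ (m + 1) * y ^ (n - m) - g m * x ^ m * y ^ (n - m + 1)) =
      0 := by
  rw [sum_sub_distrib, sum_range_succ, hf, sum_range_succ', hg]
  simp only [zero_mul, add_zero, sub_eq_zero]
  refine sum_congr rfl fun m hm => ?_
  have hm : m < n := mem_range.mp hm
  rw [hfg m hm, show n - (m + 1) + 1 = n - m by omega]

noncomputable def macCoeff (q k : ℝ) (n m : ℕ) : ℂ :=
  (∏ l ∈ range m,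
      ((1 - qpow q ((k : ℂ) + l)) * (1 - qpow q ((l : ℂ) - n)) /
        ((1 - qpow q (1 + l)) * (1 - qpow q (1 - (n : ℂ) - k + l))))) *
    qpow q ((1 - (k : ℂ)) * m)

lemma macP_eq_sum (q k : ℝ) (n : ℕ) (z1 z2 : ℂ) :
    macP q k n z1 z2 = ∑ m ∈ range (n + 1), macCoeff q k n m * z1 ^ m * z2 ^ (n - m) := rfl

lemma macCoeff_succ (q k : ℝ) (n m : ℕ) :
    macCoeff q k n (m + 1) = macCoeff q k n m *
      ((1 - qpow q ((k : ℂ) + m)) * (1 - qpow q ((m : ℂ) - n)) /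
        ((1 - qpow q (1 + m)) * (1 - qpow q (1 - (n : ℂ) - k + m))) * qpow q (1 - k)) := by
  rw [macCoeff, macCoeff, prod_range_succ,
    show (1 - (k : ℂ)) * ((m + 1 : ℕ) : ℂ) = (1 - k) * m + (1 - k) by push_cast; ring,
    qpow_add q ((1 - k) * m) (1 - k)]
  ring

section Recurrence

variable {q k : ℝ} (hq0 : 0 < q) (hq1 : q < 1) (hk0 : 0 < k)
include hq0

lemma macCoeff_ratio_eq (m j : ℕ) (hqk : (q : ℂ) ^ (k : ℂ) * (q : ℂ) ^ j ≠ 1) :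
    (1 - qpow q ((k : ℂ) + m)) * (1 - qpow q ((m : ℂ) - (m + 1 + j : ℕ))) /
        ((1 - qpow q (1 + m)) * (1 - qpow q (1 - ((m + 1 + j : ℕ) : ℂ) - k + m))) *
        qpow q (1 - k) =
      (1 - (q : ℂ) ^ (k : ℂ) * (q : ℂ) ^ m) * (1 - (q : ℂ) ^ (j + 1)) /
        ((1 - (q : ℂ) ^ (m + 1)) * (1 - (q : ℂ) ^ (k : ℂ) * (q : ℂ) ^ j)) := by
  have hq : (q : ℂ) ≠ 0 := Complex.ofReal_ne_zero.mpr hq0.ne'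
  have hT : (q : ℂ) ^ (k : ℂ) ≠ 0 := Complex.cpow_ne_zero_iff.mpr (Or.inl hq)
  rw [show ((m : ℂ) - ((m + 1 + j : ℕ) : ℂ)) = -((j + 1 : ℕ) : ℂ) by push_cast; ring,
    show (1 - ((m + 1 + j : ℕ) : ℂ) - k + m) = -((k : ℂ) + (j : ℕ)) by push_cast; ring,
    show (1 : ℂ) + m = ((m + 1 : ℕ) : ℂ) by push_cast; ring, show (1 : ℂ) - k = 1 + -k by ring]
  simp only [qpow_eq_cpow hq0, Complex.cpow_add _ _ hq, Complex.cpow_neg, Complex.cpow_natCast,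
    Complex.cpow_one]
  have hv : 1 - (q : ℂ) ^ (k : ℂ) * (q : ℂ) ^ j ≠ 0 := sub_ne_zero.mpr hqk.symm
  have hv' : 1 - ((q : ℂ) ^ (k : ℂ) * (q : ℂ) ^ j)⁻¹ ≠ 0 := by
    rwa [sub_ne_zero, ne_comm, inv_ne_one]
  field_simp
  ring

include hq1 hk0 in
lemma one_sub_cpow_mul_pow_ne_zero (j : ℕ) : 1 - (q : ℂ) ^ (k : ℂ) * (q : ℂ) ^ j ≠ 0 := by
  rw [sub_ne_zero, ← Complex.ofReal_cpow hq0.le, ← Complex.ofReal_pow, ← Complex.ofReal_mul,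
    ne_comm, Ne, Complex.ofReal_eq_one]
  exact (mul_lt_one_of_nonneg_of_lt_one_left (Real.rpow_nonneg hq0.le k)
    (Real.rpow_lt_one hq0.le hq1 hk0) (pow_le_one₀ hq0.le hq1.le)).ne

include hq1 in
lemma one_sub_pow_succ_ne_zero (m : ℕ) : 1 - (q : ℂ) ^ (m + 1) ≠ 0 := by
  rw [sub_ne_zero, ← Complex.ofReal_pow, ne_comm, Ne, Complex.ofReal_eq_one]
  exact (pow_lt_one₀ hq0.le hq1 m.succ_ne_zero).ne

include hq1 hk0 in
lemma macCoeff_mul_eq_macCoeff_succ_mul {n m : ℕ} (hm : m < n) :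
    macCoeff q k n m * ((q : ℂ) ^ (k : ℂ) * (q : ℂ) ^ m + (q : ℂ) ^ (n - m) -
        (1 + (q : ℂ) ^ (k : ℂ) * (q : ℂ) ^ n)) =
      macCoeff q k n (m + 1) * ((q : ℂ) ^ (m + 1) + (q : ℂ) ^ (k : ℂ) * (q : ℂ) ^ (n - (m + 1)) -
        (1 + (q : ℂ) ^ (k : ℂ) * (q : ℂ) ^ n)) := by
  obtain ⟨j, rfl⟩ : ∃ j, n = m + 1 + j := ⟨n - (m + 1), by omega⟩
  have hv := one_sub_cpow_mul_pow_ne_zero hq0 hq1 hk0 j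
  have hu := one_sub_pow_succ_ne_zero hq0 hq1 m
  rw [macCoeff_succ, macCoeff_ratio_eq hq0 m j (sub_ne_zero.mp hv).symm,
    show m + 1 + j - m = j + 1 by omega, show m + 1 + j - (m + 1) = j by omega]
  field_simp
  ring

end Recurrence

lemma macP_eigen_cleared {q k : ℝ} (hq0 : 0 < q) (hq1 : q < 1) (hk0 : 0 < k) (n : ℕ)
    (z1 z2 : ℂ) :
    ((q : ℂ) ^ (k : ℂ) * z1 - z2) * macP q k n ((q : ℂ) * z1) z2 +
        (z1 - (q : ℂ) ^ (k : ℂ) * z2) * macP q k n z1 ((q : ℂ) * z2) =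
      (1 + (q : ℂ) ^ (k : ℂ) * (q : ℂ) ^ n) * (z1 - z2) * macP q k n z1 z2 := by
  set T := (q : ℂ) ^ (k : ℂ)
  set E := 1 + T * (q : ℂ) ^ n
  rw [← sub_eq_zero, ← sum_range_telescope_of_shift
    (f := fun m => macCoeff q k n m * (T * (q : ℂ) ^ m + (q : ℂ) ^ (n - m) - E))
    (g := fun m => macCoeff q k n m * ((q : ℂ) ^ m + T * (q : ℂ) ^ (n - m) - E)) z1 z2
    (by simp only [Nat.sub_self, pow_zero, E]; ring) (by simp only [Nat.sub_zero, pow_zero, E]; ring)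
    fun m hm => macCoeff_mul_eq_macCoeff_succ_mul hq0 hq1 hk0 hm]
  simp only [macP_eq_sum, mul_sum, ← sum_add_distrib, ← sum_sub_distrib]
  refine sum_congr rfl fun m _ => ?_
  rw [mul_pow, mul_pow, pow_succ z1, pow_succ z2]
  ring

theorem stmt5_general (q k t : ℝ) (hq0 : 0 < q) (hq1 : q < 1) (hk0 : 0 < k)
    (ht : t = q ^ k) (n : ℕ) (z1 z2 : ℂ) (hz : z1 ≠ z2) :
    (t : ℂ) * (((t : ℂ) * z1 - z2) / (z1 - z2) * macP q k n ((q : ℂ) * z1) z2 +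
        ((t : ℂ) * z2 - z1) / (z2 - z1) * macP q k n z1 ((q : ℂ) * z2)) =
      (t : ℂ) * (1 + (t : ℂ) * (q : ℂ) ^ n) * macP q k n z1 z2 := by
  subst ht
  rw [Complex.ofReal_cpow hq0.le]
  have hz12 : z1 - z2 ≠ 0 := sub_ne_zero.mpr hz
  have key := macP_eigen_cleared hq0 hq1 hk0 n z1 z2
  generalize macP q k n ((q : ℂ) * z1) z2 = P₁ at key ⊢
  generalize macP q k n z1 ((q : ℂ) * z2) = P₂ at key ⊢
  field_simp
  linear_combination (q : ℂ) ^ (k : ℂ) * (z2 - z1) * key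

/-- `P_n` is an eigenfunction of the rank-one Macdonald operator with eigenvalue
`t(1 + t qⁿ)`. -/
theorem stmt5 (q k t : ℝ) (hq0 : 0 < q) (hq1 : q < 1) (hk0 : 0 < k) (hk1 : k < 1)
    (ht : t = q ^ k) (n : ℕ) (z1 z2 : ℂ) (hz : z1 ≠ z2) :
    (t : ℂ) * (((t : ℂ) * z1 - z2) / (z1 - z2) * macP q k n ((q : ℂ) * z1) z2 +
        ((t : ℂ) * z2 - z1) / (z2 - z1) * macP q k n z1 ((q : ℂ) * z2)) =
      (t : ℂ) * (1 + (t : ℂ) * (q : ℂ) ^ n) * macP q k n z1 z2 :=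
  stmt5_general q k t hq0 hq1 hk0 ht n z1 z2 hz
end

section
/- Let q be real with 0 < q < 1, let α ∈ ℂ, let β ∈ ℂ be nonzero, let n ∈ ℕ, and let R be real with 0 < R < 1/|β|. Then (1/(2πi)) ∮_{|y|=R} y^{−n} · [(α y ; q)_∞ / (β y ; q)_∞] · dy/y = β^n · [∏_{m=0}^{n−1} (1 − q^m α/β)] / [∏_{m=1}^{n} (1 − q^m)]. -/
/-- The q-Pochhammer symbol `(z;q)_∞ = ∏_{i=0}^∞ (1 - z qⁱ)`. -/
noncomputable def qPochInf (q : ℝ) (z : ℂ) : ℂ := ∏' i : ℕ, (1 - z * (q : ℂ) ^ i)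

/-!
Let `S(y) = ∑ₖ aₖ yᵏ`, where `aₖ = βᵏ (α/β;q)ₖ / (q;q)ₖ` is the right-hand side at `k`. The
recursion `aₖ₊₁ (1 - qᵏ⁺¹) = aₖ (β - α qᵏ)` gives radius of convergence `≥ 1/|β|` and the
q-difference equation `(1 - βy) S(y) = (1 - αy) S(qy)`. Hence `Φ(y) = S(y) (βy;q)_∞ - (αy;q)_∞`
satisfies `Φ(y) = (1 - αy) Φ(qy)`; iterating, `Φ(y) = (αy;q)_N Φ(qᴺy) → 0`, which is the
q-binomial theorem `(αy;q)_∞ / (βy;q)_∞ = S(y)`. The integral is then the `n`-th Taylor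
coefficient of `S` at `0` by Cauchy's formula.
-/

open Filter Topology Finset FormalMultilinearSeries Complex
open scoped NNReal ENNReal Real

theorem HasFPowerSeriesOnBall.two_pi_I_inv_smul_circleIntegral_eq_coeff {E : Type*}
    [NormedAddCommGroup E] [NormedSpace ℂ E] [CompleteSpace E] {f : ℂ → E}
    {p : FormalMultilinearSeries ℂ ℂ E} {c : ℂ} {r : ℝ≥0∞} (hf : HasFPowerSeriesOnBall f p c r)
    {R : ℝ≥0} (hR0 : 0 < R) (hR : (R : ℝ≥0∞) < r) (n : ℕ) :
    (2 * π * I : ℂ)⁻¹ • ∮ z in C(c, R), (z - c)⁻¹ ^ n • (z - c)⁻¹ • f z = p.coeff n := by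
  have hsub : Metric.closedBall c R ⊆ Metric.eball c r := fun z hz =>
    Metric.mem_eball.mpr ((edist_le_coe.mpr (by simpa [← dist_nndist] using hz)).trans_lt hR)
  have hcauchy := ((hf.differentiableOn.mono hsub).hasFPowerSeriesOnBall hR0).hasFPowerSeriesAt
  rw [← hcauchy.eq_formalMultilinearSeries hf.hasFPowerSeriesAt, FormalMultilinearSeries.coeff]
  simp [cauchyPowerSeries]

lemma le_radius_ofScalars_of_norm_succ_le {𝕜 : Type*} [NontriviallyNormedField 𝕜] {c : ℕ → 𝕜}
    {t : ℕ → ℝ} {l : ℝ≥0} (hl : l ≠ 0) (ht : Tendsto t atTop (𝓝 l))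
    (hc : ∀ n, ‖c (n + 1)‖ ≤ t n * ‖c n‖) : ((l⁻¹ : ℝ≥0) : ℝ≥0∞) ≤ (ofScalars 𝕜 c).radius := by
  refine ENNReal.le_of_forall_nnreal_lt fun r hr => ?_
  rw [ENNReal.coe_lt_coe, NNReal.lt_inv_iff_mul_lt hl] at hr
  have hrl : (r : ℝ) * l < 1 := by exact_mod_cast hr
  refine le_radius_of_summable_norm _ (summable_of_ratio_norm_eventually_le
    (r := (r * l + 1) / 2) (by linarith) ?_)
  have hlim : Tendsto (fun n => (r : ℝ) * t n) atTop (𝓝 (r * l)) := ht.const_mul _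
  filter_upwards [hlim.eventually_le_const (by linarith : (r : ℝ) * l < (r * l + 1) / 2)] with n hn
  simp only [ofScalars_norm, norm_mul, norm_norm, norm_pow, NNReal.norm_eq, pow_succ]
  calc ‖c (n + 1)‖ * (r ^ n * r) ≤ t n * ‖c n‖ * (r ^ n * r) := by gcongr; exact hc n
    _ = (r * t n) * (‖c n‖ * r ^ n) := by ring
    _ ≤ (r * l + 1) / 2 * (‖c n‖ * r ^ n) := by gcongr

lemma norm_mul_ofReal_pow (z : ℂ) (q : ℝ) (i : ℕ) : ‖z * (q : ℂ) ^ i‖ = ‖z‖ * |q| ^ i := by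
  rw [norm_mul, norm_pow, norm_real, Real.norm_eq_abs]

lemma norm_mul_ofReal_pow_le {q : ℝ} (hq : |q| ≤ 1) (z : ℂ) (i : ℕ) :
    ‖z * (q : ℂ) ^ i‖ ≤ ‖z‖ := by
  rw [norm_mul_ofReal_pow]
  exact mul_le_of_le_one_right (norm_nonneg z) (pow_le_one₀ (abs_nonneg q) hq)

lemma tendsto_ofReal_pow_atTop_nhds_zero {q : ℝ} (hq : |q| < 1) :
    Tendsto (fun k : ℕ => (q : ℂ) ^ k) atTop (𝓝 0) :=
  tendsto_pow_atTop_nhds_zero_of_norm_lt_one (by rwa [norm_real, Real.norm_eq_abs])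

lemma summable_norm_mul_ofReal_pow {q : ℝ} (hq : |q| < 1) (z : ℂ) :
    Summable fun i : ℕ => ‖z * (q : ℂ) ^ i‖ := by
  simp_rw [norm_mul_ofReal_pow]
  exact (summable_geometric_of_lt_one (abs_nonneg q) hq).mul_left _

lemma hasProd_qPochInf {q : ℝ} (hq : |q| < 1) (z : ℂ) :
    HasProd (fun i : ℕ => 1 - z * (q : ℂ) ^ i) (qPochInf q z) := by
  simp_rw [sub_eq_add_neg]
  exact (multipliable_one_add_of_summable
    (by simpa using summable_norm_mul_ofReal_pow hq z)).hasProd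

lemma qPochInf_eq_one_sub_mul {q : ℝ} (hq : |q| < 1) (z : ℂ) :
    qPochInf q z = (1 - z) * qPochInf q (q * z) := by
  have hshift : (fun i : ℕ => 1 - q * z * (q : ℂ) ^ i) = fun i => 1 - z * (q : ℂ) ^ (i + 1) :=
    funext fun i => by ring
  rw [qPochInf, qPochInf, hshift,
    tprod_eq_zero_mul' (hshift ▸ (hasProd_qPochInf hq _).multipliable)]
  simp

lemma qPochInf_ne_zero {q : ℝ} (hq : |q| < 1) {z : ℂ} (hz : ‖z‖ < 1) : qPochInf q z ≠ 0 := by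
  have hfac : ∀ i : ℕ, 1 + -(z * (q : ℂ) ^ i) ≠ 0 := fun i h => by
    have hone : z * (q : ℂ) ^ i = 1 := by linear_combination -h
    have := norm_mul_ofReal_pow_le hq.le z i
    rw [hone, norm_one] at this
    linarith
  simpa [qPochInf, sub_eq_add_neg] using
    tprod_one_add_ne_zero_of_summable hfac (by simpa using summable_norm_mul_ofReal_pow hq z)

lemma norm_qPochInf_sub_one_le {q : ℝ} (hq : |q| < 1) (z : ℂ) :
    ‖qPochInf q z - 1‖ ≤ Real.exp (‖z‖ / (1 - |q|)) - 1 := by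
  have hsum : HasSum (fun i : ℕ => ‖z * (q : ℂ) ^ i‖) (‖z‖ / (1 - |q|)) := by
    simp_rw [norm_mul_ofReal_pow, div_eq_mul_inv]
    exact (hasSum_geometric_of_lt_one (abs_nonneg q) hq).mul_left _
  refine le_of_tendsto ((hasProd_qPochInf hq z).tendsto_prod_nat.sub_const 1).norm
    (Eventually.of_forall fun N => ?_)
  calc ‖∏ i ∈ range N, (1 - z * (q : ℂ) ^ i) - 1‖
      ≤ Real.exp (∑ i ∈ range N, ‖-(z * (q : ℂ) ^ i)‖) - 1 := by
        simpa [sub_eq_add_neg] using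
          (range N).norm_prod_one_add_sub_one_le fun i => -(z * (q : ℂ) ^ i)
    _ ≤ Real.exp (‖z‖ / (1 - |q|)) - 1 := by
        simp_rw [norm_neg]
        gcongr
        exact sum_le_hasSum _ (fun i _ => norm_nonneg _) hsum

lemma tendsto_qPochInf_nhds_zero {q : ℝ} (hq : |q| < 1) :
    Tendsto (qPochInf q) (𝓝 0) (𝓝 1) := by
  rw [tendsto_iff_norm_sub_tendsto_zero]
  have hbound : Tendsto (fun z : ℂ => Real.exp (‖z‖ / (1 - |q|)) - 1) (𝓝 0) (𝓝 0) := by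
    have : Continuous fun z : ℂ => Real.exp (‖z‖ / (1 - |q|)) - 1 := by fun_prop
    simpa using this.tendsto 0
  exact squeeze_zero (fun _ => norm_nonneg _) (norm_qPochInf_sub_one_le hq) hbound

lemma eq_zero_of_qDifference_of_tendsto_zero {q : ℝ} (hq : |q| < 1) {a : ℂ} {r : ℝ}
    {Φ : ℂ → ℂ} (hΦ0 : Tendsto Φ (𝓝 0) (𝓝 0))
    (hΦ : ∀ y : ℂ, ‖y‖ < r → Φ y = (1 - a * y) * Φ (q * y)) {y : ℂ} (hy : ‖y‖ < r) :
    Φ y = 0 := by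
  have hiter : ∀ N : ℕ,
      Φ y = (∏ i ∈ range N, (1 - a * y * (q : ℂ) ^ i)) * Φ ((q : ℂ) ^ N * y) := by
    intro N
    induction N with
    | zero => simp
    | succ N ih =>
      have hN : ‖(q : ℂ) ^ N * y‖ < r := by
        rw [mul_comm]
        exact (norm_mul_ofReal_pow_le hq.le y N).trans_lt hy
      rw [ih, hΦ _ hN, prod_range_succ, pow_succ', mul_assoc (q : ℂ)]
      ring
  have hlim : Tendsto (fun N : ℕ =>
      (∏ i ∈ range N, (1 - a * y * (q : ℂ) ^ i)) * Φ ((q : ℂ) ^ N * y))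
      atTop (𝓝 (qPochInf q (a * y) * 0)) :=
    (hasProd_qPochInf hq _).tendsto_prod_nat.mul
      (hΦ0.comp (by simpa using (tendsto_ofReal_pow_atTop_nhds_zero hq).mul_const y))
  rw [mul_zero] at hlim
  exact tendsto_nhds_unique (tendsto_const_nhds.congr hiter) hlim

noncomputable def qBinomialCoeff (q : ℝ) (α β : ℂ) (k : ℕ) : ℂ :=
  β ^ k * (∏ m ∈ range k, (1 - (q : ℂ) ^ m * α / β)) / ∏ m ∈ range k, (1 - (q : ℂ) ^ (m + 1))

lemma one_sub_ofReal_pow_ne_zero {q : ℝ} (hq : |q| < 1) {k : ℕ} (hk : k ≠ 0) :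
    1 - (q : ℂ) ^ k ≠ 0 := by
  rw [sub_ne_zero, ne_comm, ← ofReal_pow, Ne, ofReal_eq_one]
  exact fun h => (pow_lt_one₀ (abs_nonneg q) hq hk).ne (by rw [← abs_pow, h, abs_one])

@[simp]
lemma qBinomialCoeff_zero (q : ℝ) (α β : ℂ) : qBinomialCoeff q α β 0 = 1 := by
  simp [qBinomialCoeff]

lemma qBinomialCoeff_succ {q : ℝ} (hq : |q| < 1) (α : ℂ) {β : ℂ} (hβ : β ≠ 0) (k : ℕ) :
    qBinomialCoeff q α β (k + 1) =
      qBinomialCoeff q α β k * (β - α * (q : ℂ) ^ k) / (1 - (q : ℂ) ^ (k + 1)) := by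
  have hD : ∏ m ∈ range k, (1 - (q : ℂ) ^ (m + 1)) ≠ 0 :=
    prod_ne_zero_iff.mpr fun m _ => one_sub_ofReal_pow_ne_zero hq m.succ_ne_zero
  have hk := one_sub_ofReal_pow_ne_zero hq k.succ_ne_zero
  simp only [qBinomialCoeff, prod_range_succ]
  generalize ∏ m ∈ range k, (1 - (q : ℂ) ^ (m + 1)) = D at hD ⊢
  generalize ∏ m ∈ range k, (1 - (q : ℂ) ^ m * α / β) = P
  field_simp
  ring

noncomputable def qBinomialSeries (q : ℝ) (α β : ℂ) : FormalMultilinearSeries ℂ ℂ ℂ :=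
  ofScalars ℂ (qBinomialCoeff q α β)

lemma qBinomialSeries_sum_eq_tsum (q : ℝ) (α β y : ℂ) :
    (qBinomialSeries q α β).sum y = ∑' k, qBinomialCoeff q α β k * y ^ k :=
  ofScalars_sum_eq _ y

@[simp]
lemma coeff_qBinomialSeries (q : ℝ) (α β : ℂ) (n : ℕ) :
    (qBinomialSeries q α β).coeff n = qBinomialCoeff q α β n :=
  coeff_ofScalars

lemma inv_nnnorm_le_radius_qBinomialSeries {q : ℝ} (hq : |q| < 1) (α : ℂ) {β : ℂ}
    (hβ : β ≠ 0) : ((‖β‖₊⁻¹ : ℝ≥0) : ℝ≥0∞) ≤ (qBinomialSeries q α β).radius := by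
  have hqpow := tendsto_ofReal_pow_atTop_nhds_zero hq
  refine le_radius_ofScalars_of_norm_succ_le
    (t := fun k => ‖β - α * (q : ℂ) ^ k‖ / ‖1 - (q : ℂ) ^ (k + 1)‖)
    (nnnorm_ne_zero_iff.mpr hβ) ?_ fun k => ?_
  · have hnum : Tendsto (fun k : ℕ => β - α * (q : ℂ) ^ k) atTop (𝓝 β) := by
      simpa using (hqpow.const_mul α).const_sub β
    have hden : Tendsto (fun k : ℕ => 1 - (q : ℂ) ^ (k + 1)) atTop (𝓝 1) := by
      simpa using ((tendsto_add_atTop_iff_nat 1).mpr hqpow).const_sub 1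
    have := hnum.norm.div hden.norm (by simp)
    rwa [norm_one, div_one] at this
  · rw [qBinomialCoeff_succ hq α hβ, norm_div, norm_mul, mul_div_assoc, mul_comm]

lemma coe_lt_radius_qBinomialSeries {q : ℝ} (hq : |q| < 1) (α : ℂ) {β : ℂ} (hβ : β ≠ 0)
    {ρ : ℝ≥0} (hρ : (ρ : ℝ) < ‖β‖⁻¹) : (ρ : ℝ≥0∞) < (qBinomialSeries q α β).radius := by
  refine lt_of_lt_of_le ?_ (inv_nnnorm_le_radius_qBinomialSeries hq α hβ)
  rw [ENNReal.coe_lt_coe, ← NNReal.coe_lt_coe]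
  simpa using hρ

lemma summable_qBinomialCoeff_mul_pow {q : ℝ} (hq : |q| < 1) (α : ℂ) {β : ℂ} (hβ : β ≠ 0)
    {y : ℂ} (hy : ‖y‖ < ‖β‖⁻¹) : Summable fun k => qBinomialCoeff q α β k * y ^ k := by
  have hmem : y ∈ Metric.eball 0 (qBinomialSeries q α β).radius := by
    rw [mem_eball_zero_iff, enorm_eq_nnnorm]
    exact coe_lt_radius_qBinomialSeries hq α hβ hy
  simpa [qBinomialSeries, ofScalars_apply_eq, mul_comm] using
    (qBinomialSeries q α β).summable hmem

lemma one_sub_mul_mul_qBinomialSeries_sum_eq {q : ℝ} (hq : |q| < 1) (α : ℂ) {β : ℂ}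
    (hβ : β ≠ 0) {y : ℂ} (hy : ‖y‖ < ‖β‖⁻¹) :
    (1 - β * y) * (qBinomialSeries q α β).sum y =
      (1 - α * y) * (qBinomialSeries q α β).sum (q * y) := by
  have hqy : ‖(q : ℂ) * y‖ < ‖β‖⁻¹ := by
    rw [mul_comm, ← pow_one (q : ℂ)]
    exact (norm_mul_ofReal_pow_le hq.le y 1).trans_lt hy
  set u : ℕ → ℂ := fun k => qBinomialCoeff q α β k * y ^ k with hu
  set v : ℕ → ℂ := fun k => qBinomialCoeff q α β k * (q * y) ^ k with hv
  have hsu : Summable u := summable_qBinomialCoeff_mul_pow hq α hβ hy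
  have hsv : Summable v := summable_qBinomialCoeff_mul_pow hq α hβ hqy
  have hshift : ∑' k, (u k - v k) = ∑' k, (β * y * u k - α * y * v k) := by
    rw [(hsu.sub hsv).tsum_eq_zero_add]
    simp only [hu, hv, pow_zero, sub_self, zero_add]
    refine tsum_congr fun k => ?_
    rw [qBinomialCoeff_succ hq α hβ]
    field_simp [one_sub_ofReal_pow_ne_zero hq k.succ_ne_zero]
    ring
  rw [hsu.tsum_sub hsv, (hsu.mul_left _).tsum_sub (hsv.mul_left _), tsum_mul_left,
    tsum_mul_left] at hshift
  rw [qBinomialSeries_sum_eq_tsum, qBinomialSeries_sum_eq_tsum]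
  linear_combination hshift

theorem qPochInf_div_qPochInf_eq_qBinomialSeries_sum {q : ℝ} (hq : |q| < 1) (α : ℂ) {β : ℂ}
    (hβ : β ≠ 0) {y : ℂ} (hy : ‖y‖ < ‖β‖⁻¹) :
    qPochInf q (α * y) / qPochInf q (β * y) = (qBinomialSeries q α β).sum y := by
  set S := (qBinomialSeries q α β).sum
  have hS : Tendsto S (𝓝 0) (𝓝 1) := by
    have hpos : 0 < (qBinomialSeries q α β).radius :=
      lt_of_lt_of_le (by simpa using hβ) (inv_nnnorm_le_radius_qBinomialSeries hq α hβ)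
    have h0 : S 0 = 1 := by
      rw [show S 0 = _ from qBinomialSeries_sum_eq_tsum q α β 0,
        tsum_eq_single 0 fun k hk => by simp [hk]]
      simp
    exact h0 ▸ ((qBinomialSeries q α β).hasFPowerSeriesOnBall hpos).continuousOn.continuousAt
      (Metric.eball_mem_nhds 0 hpos)
  have hPoch : ∀ a : ℂ, Tendsto (fun y => qPochInf q (a * y)) (𝓝 0) (𝓝 1) := fun a =>
    (tendsto_qPochInf_nhds_zero hq).comp (by simpa using (continuous_const_mul a).tendsto 0)
  have hΦ0 : Tendsto (fun y => S y * qPochInf q (β * y) - qPochInf q (α * y)) (𝓝 0) (𝓝 0) := by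
    simpa using (hS.mul (hPoch β)).sub (hPoch α)
  have hΦ : ∀ y : ℂ, ‖y‖ < ‖β‖⁻¹ → S y * qPochInf q (β * y) - qPochInf q (α * y) =
      (1 - α * y) * (S (q * y) * qPochInf q (β * (q * y)) - qPochInf q (α * (q * y))) := by
    intro y hy
    rw [qPochInf_eq_one_sub_mul hq (β * y), qPochInf_eq_one_sub_mul hq (α * y),
      mul_left_comm _ β, mul_left_comm _ α]
    linear_combination
      qPochInf q (β * (q * y)) * one_sub_mul_mul_qBinomialSeries_sum_eq hq α hβ hy
  have hβy : ‖β * y‖ < 1 := by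
    rw [norm_mul, ← mul_inv_cancel₀ (norm_ne_zero_iff.mpr hβ)]
    exact mul_lt_mul_of_pos_left hy (norm_pos_iff.mpr hβ)
  rw [div_eq_iff (qPochInf_ne_zero hq hβy)]
  linear_combination -eq_zero_of_qDifference_of_tendsto_zero hq hΦ0 hΦ hy

/-- Residue evaluation:
`(1/2πi) ∮_{|y|=R} y^{-n} (αy;q)_∞/(βy;q)_∞ dy/y
  = βⁿ ∏_{m=0}^{n-1}(1-q^m α/β) / ∏_{m=1}^{n}(1-q^m)`. -/
theorem stmt17 (q : ℝ) (hq0 : 0 < q) (hq1 : q < 1) (α β : ℂ) (hβ : β ≠ 0)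
    (n : ℕ) (R : ℝ) (hR0 : 0 < R) (hR1 : R < 1 / ‖β‖) :
    (1 / (2 * (Real.pi : ℂ) * Complex.I)) *
        (∮ y in C(0, R), (y ^ n)⁻¹ * (qPochInf q (α * y) / qPochInf q (β * y)) / y) =
      β ^ n * (∏ m ∈ Finset.range n, (1 - (q : ℂ) ^ m * α / β)) /
        ∏ m ∈ Finset.range n, (1 - (q : ℂ) ^ (m + 1)) := by
  have hq : |q| < 1 := abs_lt.mpr ⟨by linarith, hq1⟩
  rw [one_div] at hR1 ⊢
  set p := qBinomialSeries q α β
  have hR : (R.toNNReal : ℝ≥0∞) < p.radius :=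
    coe_lt_radius_qBinomialSeries hq α hβ (by rwa [Real.coe_toNNReal R hR0.le])
  have hcoeff := (p.hasFPowerSeriesOnBall (zero_le.trans_lt hR))
    |>.two_pi_I_inv_smul_circleIntegral_eq_coeff (Real.toNNReal_pos.mpr hR0) hR n
  simp only [Real.coe_toNNReal R hR0.le, sub_zero, smul_eq_mul, p,
    coeff_qBinomialSeries] at hcoeff
  change _ = qBinomialCoeff q α β n
  rw [← hcoeff, circleIntegral.integral_congr hR0.le fun z hz => ?_]
  have hz : ‖z‖ < ‖β‖⁻¹ := (mem_sphere_zero_iff_norm.mp hz).trans_lt hR1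
  rw [qPochInf_div_qPochInf_eq_qBinomialSeries_sum hq α hβ hz]
  ring
end
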